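/- arXiv:2104.02536 — 2 statements merged into one kernel-verified Lean document; each statement's English description precedes it below -/
import Mathlib

section
/- Let f : [0, T] × B → ℝ^n be uniformly continuous and bounded by C > 0 in the 1-norm on the set B' = {(t,x) : 0 ≤ t ≤ t_a, ‖x - x₀‖₁ ≤ x_b}, and let T = min(t_a, x_b / C). Then for every ε > 0 there exists a piecewise linear function φ : [0, T] → ℝ^n with φ(0) = x₀ such that (t, φ(t)) ∈ B' for all t ∈ [0, T], and at every point t where φ is differentiable, ‖φ'(t) - f(t, φ(t))‖₁ ≤ ε. -/
open Set

/-- The 1-norm on `Fin n → ℝ`. -/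
noncomputable def norm1 {n : ℕ} (v : Fin n → ℝ) : ℝ := ∑ i, |v i|

lemma norm1_nonneg {n : ℕ} (v : Fin n → ℝ) : 0 ≤ norm1 v :=
  Finset.sum_nonneg fun _ _ => abs_nonneg _

lemma norm1_add_le {n : ℕ} (v w : Fin n → ℝ) : norm1 (v + w) ≤ norm1 v + norm1 w := by
  rw [norm1, norm1, norm1, ← Finset.sum_add_distrib]
  exact Finset.sum_le_sum fun i _ => abs_add_le _ _

lemma norm1_smul {n : ℕ} (a : ℝ) (v : Fin n → ℝ) : norm1 (a • v) = |a| * norm1 v := by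
  simp [norm1, abs_mul, Finset.mul_sum]

lemma pi_norm_le_norm1 {n : ℕ} (v : Fin n → ℝ) : ‖v‖ ≤ norm1 v := by
  refine pi_norm_le_iff_of_nonneg (norm1_nonneg v) |>.2 fun i => ?_
  rw [Real.norm_eq_abs]
  exact Finset.single_le_sum (fun j _ => abs_nonneg (v j)) (Finset.mem_univ i)

lemma norm1_le_card_norm {n : ℕ} (v : Fin n → ℝ) : norm1 v ≤ n * ‖v‖ := by
  calc norm1 v ≤ ∑ _i : Fin n, ‖v‖ :=
        Finset.sum_le_sum fun i _ => by
          rw [← Real.norm_eq_abs]; exact norm_le_pi_norm v i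
    _ = n * ‖v‖ := by simp

/-- Cauchy–Euler approximation theorem: existence of polygonal ε-approximate
solutions of `ẋ = f(t,x)`, `x 0 = x₀`. -/
theorem cauchy_euler_approx (n : ℕ) (f : ℝ → (Fin n → ℝ) → (Fin n → ℝ))
    (x₀ : Fin n → ℝ) (t_a x_b C : ℝ) (hta : 0 < t_a) (hxb : 0 < x_b) (hC : 0 < C)
    (B' : Set (ℝ × (Fin n → ℝ)))
    (hB' : B' = {p | 0 ≤ p.1 ∧ p.1 ≤ t_a ∧ norm1 (p.2 - x₀) ≤ x_b})
    (hcont : UniformContinuousOn (fun p : ℝ × (Fin n → ℝ) => f p.1 p.2) B')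
    (hbound : ∀ t x, (t, x) ∈ B' → norm1 (f t x) ≤ C)
    (T : ℝ) (hT : T = min t_a (x_b / C)) :
    ∀ ε : ℝ, 0 < ε →
      ∃ (m : ℕ) (c : ℕ → ℝ) (s : ℕ → Fin n → ℝ) (φ : ℝ → Fin n → ℝ),
        0 < m ∧ c 0 = 0 ∧ c m = T ∧ (∀ i, i < m → c i < c (i + 1)) ∧
        φ 0 = x₀ ∧
        (∀ i, i < m → ∀ t ∈ Icc (c i) (c (i + 1)),
          φ t = φ (c i) + (t - c i) • s i) ∧
        (∀ t ∈ Icc 0 T, (t, φ t) ∈ B') ∧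
        (∀ i, i < m → ∀ t ∈ Ioo (c i) (c (i + 1)),
          HasDerivAt φ (s i) t ∧ norm1 (s i - f t (φ t)) ≤ ε) := by
  intro ε hε
  have hTpos : 0 < T := by rw [hT]; exact lt_min hta (div_pos hxb hC)
  have hTta : T ≤ t_a := hT ▸ min_le_left _ _
  have hCT : C * T ≤ x_b := by
    rw [hT]
    calc C * min t_a (x_b / C) ≤ C * (x_b / C) := by
          exact mul_le_mul_of_nonneg_left (min_le_right _ _) hC.le
      _ = x_b := mul_div_cancel₀ _ hC.ne'
  set ε₀ : ℝ := ε / (n + 1) with hε₀def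
  have hε₀ : 0 < ε₀ := by positivity
  obtain ⟨δ, hδ, hδ'⟩ := (Metric.uniformContinuousOn_iff).1 hcont ε₀ hε₀
  obtain ⟨m, hm⟩ := exists_nat_gt (T * (1 + C) / δ)
  have hm0 : 0 < m := by
    have : (0 : ℝ) < T * (1 + C) / δ := by positivity
    exact_mod_cast Nat.cast_pos.1 (this.trans hm)
  set h : ℝ := T / m with hhdef
  have hh : 0 < h := div_pos hTpos (by exact_mod_cast hm0)
  have hmesh : h * (1 + C) < δ := by
    have h1 : T * (1 + C) < m * δ := by
      have := (div_lt_iff₀ hδ).1 hm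
      linarith
    rw [hhdef, div_mul_eq_mul_div, div_lt_iff₀ (by exact_mod_cast hm0)]
    calc T * (1 + C) < ↑m * δ := h1
      _ = δ * ↑m := mul_comm _ _
  set c : ℕ → ℝ := fun i => i * h with hcdef
  have hcm : c m = T := by
    rw [hcdef]; field_simp [hhdef]
    rw [hhdef]; exact mul_div_cancel₀ _ (by exact_mod_cast hm0.ne')
  -- recursive nodes
  let x : ℕ → Fin n → ℝ := fun i => Nat.rec x₀ (fun j xj => xj + h • f (c j) xj) i
  set s : ℕ → Fin n → ℝ := fun i => f (c i) (x i) with hsdef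
  have hx0 : x 0 = x₀ := rfl
  have hxsucc : ∀ i, x (i + 1) = x i + h • s i := fun i => rfl
  -- the index function and φ
  set k : ℝ → ℕ := fun t => (⌊t / h⌋).toNat with hkdef
  set φ : ℝ → Fin n → ℝ := fun t => x (k t) + (t - c (k t)) • s (k t) with hφdef
  have hkc : ∀ i : ℕ, k (c i) = i := by
    intro i
    have : c i / h = (i : ℝ) := by
      rw [hcdef]; field_simp
    rw [hkdef]; simp [this]
  have hφc : ∀ i : ℕ, φ (c i) = x i := by
    intro i
    rw [hφdef]; simp [hkc i]
  have hkt : ∀ i : ℕ, ∀ t : ℝ, c i ≤ t → t < c (i + 1) → k t = i := by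
    intro i t h1 h2
    have hfl : ⌊t / h⌋ = (i : ℤ) := by
      rw [Int.floor_eq_iff]
      constructor
      · rw [le_div_iff₀ hh]
        simpa [hcdef] using h1
      · rw [div_lt_iff₀ hh]
        push_cast
        simpa [hcdef, add_mul] using h2
    rw [hkdef]; simp [hfl]
  -- bound on x
  have hmemB : ∀ t (y : Fin n → ℝ), 0 ≤ t → t ≤ T → norm1 (y - x₀) ≤ C * t → (t, y) ∈ B' := by
    intro t y h0 h1 h2
    rw [hB']
    refine ⟨h0, h1.trans hTta, h2.trans ?_⟩
    calc C * t ≤ C * T := mul_le_mul_of_nonneg_left h1 hC.le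
      _ ≤ x_b := hCT
  have hcnonneg : ∀ i : ℕ, 0 ≤ c i := fun i => by positivity
  have hcmono : ∀ i j : ℕ, i ≤ j → c i ≤ c j := by
    intro i j hij
    have : (i : ℝ) ≤ j := by exact_mod_cast hij
    exact mul_le_mul_of_nonneg_right this hh.le
  have hx : ∀ i, i ≤ m → norm1 (x i - x₀) ≤ C * c i := by
    intro i
    induction i with
    | zero => intro _; simp [hx0, hcdef, norm1]
    | succ j ih =>
      intro hj
      have hjm : j ≤ m := Nat.le_of_succ_le hj
      have hxj := ih hjm
      have hmemj : (c j, x j) ∈ B' :=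
        hmemB _ _ (hcnonneg j) (by simpa [hcm] using hcmono j m hjm) hxj
      have hsj : norm1 (s j) ≤ C := hbound _ _ hmemj
      have : x (j + 1) - x₀ = (x j - x₀) + h • s j := by
        rw [hxsucc]; abel
      rw [this]
      calc norm1 ((x j - x₀) + h • s j) ≤ norm1 (x j - x₀) + norm1 (h • s j) :=
            norm1_add_le _ _
        _ = norm1 (x j - x₀) + h * norm1 (s j) := by
            rw [norm1_smul, abs_of_pos hh]
        _ ≤ C * c j + h * C := by
            exact add_le_add hxj (mul_le_mul_of_nonneg_left hsj hh.le)
        _ = C * c (j + 1) := by rw [hcdef]; push_cast; ring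
  have hsC : ∀ i, i ≤ m → norm1 (s i) ≤ C := by
    intro i hi
    exact hbound _ _ (hmemB _ _ (hcnonneg i) (by simpa [hcm] using hcmono i m hi) (hx i hi))
  -- key: φ bound on [0,T]
  have hφbound : ∀ t, 0 ≤ t → t ≤ T → k t ≤ m ∧ c (k t) ≤ t ∧ norm1 (φ t - x₀) ≤ C * t := by
    intro t h0 h1
    by_cases hteq : t = T
    · subst hteq
      have : k t = m := by rw [← hcm]; exact hkc m
      refine ⟨this.le, ?_, ?_⟩
      · rw [this, hcm]
      · rw [hφdef]
        simp only [this, hcm]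
        simpa [hcm] using hx m le_rfl
    · have htT : t < T := lt_of_le_of_ne h1 hteq
      -- k t < m
      have hfl0 : 0 ≤ ⌊t / h⌋ := Int.floor_nonneg.2 (by positivity)
      have hklt : k t < m := by
        have h2 : t / h < m := by
          rw [div_lt_iff₀ hh]
          calc t < T := htT
            _ = m * h := by rw [← hcm, hcdef]
        have h3 : ⌊t / h⌋ < (m : ℤ) := Int.floor_lt.2 (by exact_mod_cast h2)
        show (⌊t / h⌋).toNat < m
        omega
      have hckt : c (k t) ≤ t := by
        rw [hcdef]
        have h3 : ((k t : ℕ) : ℤ) = ⌊t / h⌋ := Int.toNat_of_nonneg hfl0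
        have : ((k t : ℕ) : ℝ) ≤ t / h := by
          rw [← Int.cast_natCast (R := ℝ), h3]
          exact Int.floor_le _
        calc (k t : ℝ) * h ≤ t / h * h := mul_le_mul_of_nonneg_right this hh.le
          _ = t := by field_simp
      refine ⟨hklt.le, hckt, ?_⟩
      have hxk := hx (k t) hklt.le
      have hsk := hsC (k t) hklt.le
      have : φ t - x₀ = (x (k t) - x₀) + (t - c (k t)) • s (k t) := by
        rw [hφdef]
        exact add_sub_right_comm _ _ _
      rw [this]
      calc norm1 _ ≤ norm1 (x (k t) - x₀) + norm1 ((t - c (k t)) • s (k t)) :=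
            norm1_add_le _ _
        _ = norm1 (x (k t) - x₀) + (t - c (k t)) * norm1 (s (k t)) := by
            rw [norm1_smul, abs_of_nonneg (by linarith)]
        _ ≤ C * c (k t) + (t - c (k t)) * C := by
            exact add_le_add hxk (mul_le_mul_of_nonneg_left hsk (by linarith))
        _ = C * t := by ring
  refine ⟨m, c, s, φ, hm0, by simp [hcdef], hcm, ?_, ?_, ?_, ?_, ?_⟩
  · intro i _
    rw [hcdef]
    have : (i : ℝ) < i + 1 := by linarith
    push_cast
    exact mul_lt_mul_of_pos_right this hh
  · have : c 0 = 0 := by simp [hcdef]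
    rw [← this, hφc 0, hx0]
  · intro i _ t ht
    by_cases hteq : t = c (i + 1)
    · subst hteq
      rw [hφc (i + 1), hφc i, hxsucc]
      congr 1
      have : c (i + 1) - c i = h := by rw [hcdef]; push_cast; ring
      rw [this]
    · have hklt : k t = i := hkt i t ht.1 (lt_of_le_of_ne ht.2 hteq)
      rw [hφc i]
      conv_lhs => rw [hφdef]
      simp only [hklt]
  · intro t ht
    obtain ⟨-, -, hb⟩ := hφbound t ht.1 ht.2
    exact hmemB t (φ t) ht.1 ht.2 hb
  · intro i hi t ht
    have hklt : k t = i := hkt i t ht.1.le ht.2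
    have hc1T : c (i + 1) ≤ T := by rw [← hcm]; exact hcmono _ _ hi
    have ht0 : 0 ≤ t := le_trans (hcnonneg i) ht.1.le
    have htT : t ≤ T := le_trans ht.2.le hc1T
    have hstep : t - c i < h := by
      have : t < c (i + 1) := ht.2
      have h2 : c (i + 1) = c i + h := by rw [hcdef]; push_cast; ring
      linarith [h2 ▸ this]
    constructor
    · -- derivative
      have hg : HasDerivAt (fun u => x i + (u - c i) • s i) (s i) t := by
        have := (((hasDerivAt_id t).sub_const (c i)).smul_const (s i)).const_add (x i)
        simpa using this
      refine hg.congr_of_eventuallyEq ?_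
      have hopen : Ioo (c i) (c (i + 1)) ∈ nhds t := Ioo_mem_nhds ht.1 ht.2
      filter_upwards [hopen] with u hu
      have : k u = i := hkt i u hu.1.le hu.2
      rw [hφdef]
      simp only [this]
    · -- ε bound
      have hiM : i ≤ m := hi.le
      have hmemi : (c i, x i) ∈ B' :=
        hmemB _ _ (hcnonneg i) (by simpa [hcm] using hcmono i m hiM) (hx i hiM)
      obtain ⟨-, -, hb⟩ := hφbound t ht0 htT
      have hmemt : (t, φ t) ∈ B' := hmemB t (φ t) ht0 htT hb
      have hdist : dist ((c i, x i) : ℝ × (Fin n → ℝ)) (t, φ t) < δ := by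
        rw [Prod.dist_eq]
        have hd1 : dist (c i) t ≤ h := by
          rw [Real.dist_eq, abs_sub_comm, abs_of_nonneg (by linarith [ht.1])]
          linarith
        have hd2 : dist (x i) (φ t) ≤ h * C := by
          rw [dist_eq_norm]
          have hφt : x i - φ t = -((t - c i) • s i) := by
            rw [hφdef]; simp only [hklt]
            exact sub_add_cancel_left _ _
          rw [hφt, norm_neg, norm_smul, Real.norm_eq_abs,
            abs_of_nonneg (by linarith [ht.1.le])]
          calc (t - c i) * ‖s i‖ ≤ h * norm1 (s i) := by
                apply mul_le_mul hstep.le (pi_norm_le_norm1 _) (norm_nonneg _) hh.le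
            _ ≤ h * C := mul_le_mul_of_nonneg_left (hsC i hiM) hh.le
        have : max (dist (c i) t) (dist (x i) (φ t)) ≤ h * (1 + C) := by
          apply max_le
          · nlinarith
          · nlinarith
        exact lt_of_le_of_lt this hmesh
      have hfd : dist (f (c i) (x i)) (f t (φ t)) < ε₀ := hδ' _ hmemi _ hmemt hdist
      have : norm1 (s i - f t (φ t)) ≤ n * dist (f (c i) (x i)) (f t (φ t)) := by
        rw [hsdef]
        simp only []
        rw [dist_eq_norm]
        exact norm1_le_card_norm _
      calc norm1 (s i - f t (φ t)) ≤ n * dist (f (c i) (x i)) (f t (φ t)) := this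
        _ ≤ n * ε₀ := mul_le_mul_of_nonneg_left hfd.le (Nat.cast_nonneg n)
        _ ≤ ε := by
            rw [hε₀def]
            rw [mul_div_assoc] at *
            have : (n : ℝ) / (n + 1) ≤ 1 := by
              rw [div_le_one (by positivity)]; linarith
            calc (n : ℝ) * (ε / (n + 1)) = (n / (n + 1)) * ε := by ring
              _ ≤ 1 * ε := mul_le_mul_of_nonneg_right this hε.le
              _ = ε := one_mul ε
end

section
/- Under the hypotheses of the Picard–Lindelöf theorem (f continuous on B' = [0, t_a] × closedBall(x₀, x_b), L-Lipschitz in x, bounded by C, and T = min(t_a, x_b/C)), as the accuracy parameter p → ∞, the Euler 2^{-p}-approximate solutions φ_p converge uniformly on [0,T] to the unique exact solution ψ, with ‖φ_p(t) - ψ(t)‖ ≤ (2^{-p}/L)(e^{LT} - 1). -/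
open Set Filter Topology

lemma gronwall_finite_exceptions {E : Type*} [NormedAddCommGroup E] [NormedSpace ℝ E]
    {u u' : ℝ → E} {K ε δ a b : ℝ} (hK : 0 < K)
    {s : Set ℝ} (hs : s.Finite)
    (hu : ContinuousOn u (Icc a b))
    (hd : ∀ t ∈ Icc a b, t ∉ s → HasDerivAt u (u' t) t ∧ ‖u' t‖ ≤ K * ‖u t‖ + ε)
    (ha : ‖u a‖ ≤ δ) :
    ∀ t ∈ Icc a b, ‖u t‖ ≤ gronwallBound δ K ε (t - a) := by
  apply le_gronwallBound_of_liminf_deriv_right_le (f' := fun t => K * ‖u t‖ + ε)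
    (continuous_norm.comp_continuousOn hu) _ ha (fun x hx => le_rfl)
  intro x hx r hr
  replace hr : K * ‖u x‖ + ε < r := hr
  set r' : ℝ := (K * ‖u x‖ + ε + r) / 2 with hr'def
  have hr1 : K * ‖u x‖ + ε < r' := by rw [hr'def]; linarith
  have hr2 : r' < r := by rw [hr'def]; linarith
  have hxb : x < b := hx.2
  have hxI : x ∈ Icc a b := ⟨hx.1, hx.2.le⟩
  have E1 : ∀ᶠ z in 𝓝[>] x, z ∈ Ioc x b := Ioc_mem_nhdsGT_of_mem ⟨le_rfl, hxb⟩
  have hIccmem : Icc a b ∈ 𝓝[>] x :=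
    mem_of_superset E1 (fun z hz => ⟨hx.1.trans hz.1.le, hz.2⟩)
  have E2 : ∀ᶠ z in 𝓝[>] x, z ∉ s := by
    have hcl : IsClosed (s \ {x}) := (hs.subset diff_subset).isClosed
    have h1 : ∀ᶠ z in 𝓝 x, z ∉ s \ {x} :=
      hcl.isOpen_compl.mem_nhds (by simp)
    filter_upwards [nhdsWithin_le_nhds h1, self_mem_nhdsWithin] with z hz hz2 hzs
    exact hz ⟨hzs, by simp [ne_of_gt (mem_Ioi.1 hz2)]⟩
  have hcw : ContinuousWithinAt u (Ioi x) x := (hu x hxI).mono_of_mem_nhdsWithin hIccmem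
  have E3 : ∀ᶠ z in 𝓝[>] x, K * ‖u z‖ + ε < r' := by
    have t2 : Tendsto (fun z => K * ‖u z‖ + ε) (𝓝[>] x) (𝓝 (K * ‖u x‖ + ε)) :=
      (hcw.norm.const_mul K).add_const ε
    exact t2.eventually_lt_const hr1
  obtain ⟨c, hc, hsub⟩ := mem_nhdsGT_iff_exists_Ioc_subset.1
    ((E1.and (E2.and E3)) : ∀ᶠ z in 𝓝[>] x, _)
  have key : ∀ z ∈ Ioc x c, (z - x)⁻¹ * (‖u z‖ - ‖u x‖) < r := by
    intro z hz
    obtain ⟨hz1, hz2, hz3⟩ := hsub hz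
    have hxz : x < z := hz.1
    have hstep : ∀ x' ∈ Ioc x z, ‖u z - u x'‖ ≤ r' * (z - x') := by
      intro x' hx'
      have key2 : ∀ w ∈ Icc x' z, HasDerivWithinAt u (u' w) (Icc x' z) w ∧ ‖u' w‖ ≤ r' := by
        intro w hw
        have hwmem : w ∈ Ioc x c := ⟨hx'.1.trans_le hw.1, hw.2.trans hz.2⟩
        obtain ⟨hw1, hw2, hw3⟩ := hsub hwmem
        have hwI : w ∈ Icc a b := ⟨hx.1.trans hw1.1.le, hw1.2⟩
        obtain ⟨hd1, hd2⟩ := hd w hwI hw2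
        exact ⟨hd1.hasDerivWithinAt, hd2.trans hw3.le⟩
      have := Convex.norm_image_sub_le_of_norm_hasDerivWithin_le
        (fun w hw => (key2 w hw).1) (fun w hw => (key2 w hw).2) (convex_Icc x' z)
        (⟨le_rfl, hx'.2⟩ : x' ∈ Icc x' z) (⟨hx'.2, le_rfl⟩ : z ∈ Icc x' z)
      rwa [Real.norm_eq_abs, abs_of_nonneg (by linarith [hx'.2] : (0:ℝ) ≤ z - x')] at this
    have hnb : (𝓝[Ioc x z] x).NeBot := by
      refine mem_closure_iff_nhdsWithin_neBot.1 ?_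
      rw [closure_Ioc (ne_of_lt hxz)]
      exact ⟨le_rfl, hxz.le⟩
    have tcont : Tendsto u (𝓝[Ioc x z] x) (𝓝 (u x)) :=
      (hu x hxI).mono (fun w hw => ⟨hx.1.trans hw.1.le, hw.2.trans (hz1.2.trans_eq rfl) |>.trans (le_refl b) |>.trans (le_refl b)⟩)
    have t3 : Tendsto (fun x' => ‖u z - u x'‖) (𝓝[Ioc x z] x) (𝓝 ‖u z - u x‖) :=
      (tendsto_const_nhds.sub tcont).norm
    have t4 : Tendsto (fun x' => r' * (z - x')) (𝓝[Ioc x z] x) (𝓝 (r' * (z - x))) :=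
      (tendsto_const_nhds.sub (tendsto_id.mono_left nhdsWithin_le_nhds)).const_mul r'
    have hfin : ‖u z - u x‖ ≤ r' * (z - x) := by
      refine le_of_tendsto_of_tendsto t3 t4 ?_
      filter_upwards [self_mem_nhdsWithin] with x' hx'
      exact hstep x' hx'
    have hpos : (0:ℝ) < z - x := by linarith
    calc (z - x)⁻¹ * (‖u z‖ - ‖u x‖) ≤ (z - x)⁻¹ * ‖u z - u x‖ := by
          apply mul_le_mul_of_nonneg_left (norm_sub_norm_le _ _) (by positivity)
      _ ≤ (z - x)⁻¹ * (r' * (z - x)) := by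
          apply mul_le_mul_of_nonneg_left hfin (by positivity)
      _ = r' := by field_simp
      _ < r := hr2
  have hev : ∀ᶠ z in 𝓝[>] x, (z - x)⁻¹ * (‖u z‖ - ‖u x‖) < r := by
    filter_upwards [Ioc_mem_nhdsGT hc] with z hz using key z hz
  exact hev.frequently

/-- Under Picard–Lindelöf hypotheses, the Euler `2^{-p}`-approximate solutions
converge uniformly to the unique exact solution with explicit error bound. -/
theorem euler_converges_to_solution (n : ℕ)
    (f : ℝ → EuclideanSpace ℝ (Fin n) → EuclideanSpace ℝ (Fin n))
    (t_a x_b C L : ℝ) (hta : 0 < t_a) (hxb : 0 < x_b) (hC : 0 < C) (hL : 0 < L)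
    (x₀ : EuclideanSpace ℝ (Fin n))
    (B' : Set (ℝ × EuclideanSpace ℝ (Fin n)))
    (hB' : B' = (Icc 0 t_a) ×ˢ Metric.closedBall x₀ x_b)
    (hfc : ContinuousOn (fun q : ℝ × EuclideanSpace ℝ (Fin n) => f q.1 q.2) B')
    (hlip : ∀ t ∈ Icc (0 : ℝ) t_a, ∀ x₁ x₂ : EuclideanSpace ℝ (Fin n),
      x₁ ∈ Metric.closedBall x₀ x_b → x₂ ∈ Metric.closedBall x₀ x_b →
      ‖f t x₁ - f t x₂‖ ≤ L * ‖x₁ - x₂‖)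
    (hbound : ∀ q ∈ B', ‖f q.1 q.2‖ ≤ C)
    (T : ℝ) (hT : T = min t_a (x_b / C))
    (ψ : ℝ → EuclideanSpace ℝ (Fin n)) (hψ0 : ψ 0 = x₀)
    (hψ : ∀ t ∈ Icc (0 : ℝ) T, HasDerivAt ψ (f t (ψ t)) t)
    (φ : ℕ → ℝ → EuclideanSpace ℝ (Fin n))
    (φ' : ℕ → ℝ → EuclideanSpace ℝ (Fin n))
    (S : ℕ → Finset ℝ)
    (hφ0 : ∀ p, φ p 0 = x₀)
    (hφc : ∀ p, ContinuousOn (φ p) (Icc 0 T))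
    (hφB : ∀ p, ∀ t ∈ Icc (0 : ℝ) T, (t, φ p t) ∈ B')
    (hφd : ∀ p, ∀ t ∈ Icc (0 : ℝ) T, t ∉ S p →
      HasDerivAt (φ p) (φ' p t) t ∧ ‖φ' p t - f t (φ p t)‖ ≤ (1/2 : ℝ) ^ p) :
    (∀ p, ∀ t ∈ Icc (0 : ℝ) T,
      ‖φ p t - ψ t‖ ≤ ((1/2 : ℝ) ^ p / L) * (Real.exp (L * T) - 1)) ∧
    TendstoUniformlyOn (fun p => φ p) ψ Filter.atTop (Icc 0 T) := by

  have hT0 : 0 < T := by rw [hT]; exact lt_min hta (div_pos hxb hC)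
  have hTa : T ≤ t_a := hT ▸ min_le_left _ _
  have hψc : ∀ t ∈ Icc (0:ℝ) T, ContinuousAt ψ t := fun t ht => (hψ t ht).continuousAt
  have step1 : ∀ t ∈ Ico (0:ℝ) T, ‖ψ t - x₀‖ ≤ x_b := by
    intro t ht
    have hCt : C * t < x_b := by
      have h1 : t < x_b / C := ht.2.trans_le (hT ▸ min_le_right _ _)
      calc C * t < C * (x_b / C) := mul_lt_mul_of_pos_left h1 hC
        _ = x_b := by field_simp
    set D : ℝ := x_b - C * t with hD
    have hDpos : 0 < D := by rw [hD]; linarith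
    set η : ℝ := D / (2 * (t + 1)) with hη
    set η' : ℝ := D / 2 with hη'
    have ht0 : 0 ≤ t := ht.1
    have hηpos : 0 < η := by apply div_pos hDpos; linarith
    have hη'pos : 0 < η' := by rw [hη']; linarith
    set b := min T ((x_b - η') / (C + η)) with hb
    have hCη : 0 < C + η := by linarith
    have hηt : η * t ≤ D / 2 := by
      rw [hη, div_mul_eq_mul_div, div_le_div_iff₀ (by linarith) (by norm_num)]
      nlinarith
    have htb : t ≤ b := by
      apply le_min ht.2.le
      rw [le_div_iff₀ hCη]
      nlinarith
    have hbt : b ≤ T := min_le_left _ _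
    have habs : ∀ s ∈ Icc (0:ℝ) b, ‖ψ s - x₀‖ ≤ (C + η) * s + η' := by
      intro s hs
      refine image_norm_le_of_norm_deriv_right_lt_deriv_boundary
        (f := fun s => ψ s - x₀) (f' := fun s => f s (ψ s)) (a := 0) (b := b)
        (B := fun s => (C + η) * s + η') (B' := fun _ => C + η)
        ?_ ?_ ?_ ?_ ?_ hs
      · intro w hw
        exact ((hψc w ⟨hw.1, hw.2.trans hbt⟩).continuousWithinAt).sub continuousWithinAt_const
      · intro w hw
        exact ((hψ w ⟨hw.1, hw.2.le.trans hbt⟩).sub_const x₀).hasDerivWithinAt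
      · simp [hψ0, hη'pos.le]
      · intro w
        simpa using ((hasDerivAt_id w).const_mul (C + η)).add_const η'
      · intro w hw heq
        have heq' : ‖ψ w - x₀‖ = (C + η) * w + η' := heq
        have hwb : w < b := hw.2
        have hwball : ψ w ∈ Metric.closedBall x₀ x_b := by
          rw [Metric.mem_closedBall, dist_eq_norm, heq']
          have hwle : w ≤ (x_b - η') / (C + η) := hwb.le.trans (min_le_right _ _)
          rw [le_div_iff₀ hCη] at hwle
          linarith
        have hwB' : ((w, ψ w) : ℝ × EuclideanSpace ℝ (Fin n)) ∈ B' := by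
          rw [hB']
          exact ⟨⟨hw.1, (hwb.le.trans hbt).trans hTa⟩, hwball⟩
        have := hbound _ hwB'
        simp only at this ⊢
        linarith
    calc ‖ψ t - x₀‖ ≤ (C + η) * t + η' := habs t ⟨ht0, htb⟩
      _ = C * t + η * t + η' := by ring
      _ ≤ C * t + D / 2 + D / 2 := by rw [hη']; linarith
      _ = x_b := by rw [hD]; ring
  have hψball : ∀ t ∈ Icc (0:ℝ) T, ψ t ∈ Metric.closedBall x₀ x_b := by
    intro t ht
    rw [Metric.mem_closedBall, dist_eq_norm]
    rcases lt_or_eq_of_le ht.2 with h | h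
    · exact step1 t ⟨ht.1, h⟩
    · subst h
      have hnb : (nhdsWithin t (Ico 0 t)).NeBot := by
        refine mem_closure_iff_nhdsWithin_neBot.1 ?_
        rw [closure_Ico hT0.ne]
        exact ⟨ht.1, le_rfl⟩
      have tc : Filter.Tendsto (fun s => ‖ψ s - x₀‖) (nhdsWithin t (Ico 0 t))
          (nhds ‖ψ t - x₀‖) :=
        ((((hψc t ht).tendsto).mono_left nhdsWithin_le_nhds).sub tendsto_const_nhds).norm
      refine le_of_tendsto tc ?_
      filter_upwards [self_mem_nhdsWithin] with s hs using step1 s hs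
  have key : ∀ p, ∀ t ∈ Icc (0:ℝ) T,
      ‖φ p t - ψ t‖ ≤ ((1/2 : ℝ) ^ p / L) * (Real.exp (L * T) - 1) := by
    intro p t ht
    have hcont : ContinuousOn (fun t => φ p t - ψ t) (Icc 0 T) :=
      (hφc p).sub (fun s hs => (hψc s hs).continuousWithinAt)
    have hder : ∀ s ∈ Icc (0:ℝ) T, s ∉ (S p : Set ℝ) →
        HasDerivAt (fun t => φ p t - ψ t) (φ' p s - f s (ψ s)) s ∧
        ‖φ' p s - f s (ψ s)‖ ≤ L * ‖φ p s - ψ s‖ + (1/2 : ℝ) ^ p := by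
      intro s hs hsS
      obtain ⟨hd1, hd2⟩ := hφd p s hs (by exact_mod_cast hsS)
      refine ⟨hd1.sub (hψ s hs), ?_⟩
      have hφball : φ p s ∈ Metric.closedBall x₀ x_b := by
        have := hφB p s hs; rw [hB'] at this; exact this.2
      have hlip' := hlip s ⟨hs.1, hs.2.trans hTa⟩ (φ p s) (ψ s) hφball (hψball s hs)
      calc ‖φ' p s - f s (ψ s)‖
          = ‖(φ' p s - f s (φ p s)) + (f s (φ p s) - f s (ψ s))‖ := by
            rw [sub_add_sub_cancel]
        _ ≤ ‖φ' p s - f s (φ p s)‖ + ‖f s (φ p s) - f s (ψ s)‖ := norm_add_le _ _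
        _ ≤ (1/2 : ℝ) ^ p + L * ‖φ p s - ψ s‖ := add_le_add hd2 hlip'
        _ = L * ‖φ p s - ψ s‖ + (1/2 : ℝ) ^ p := by ring
    have h0 : ‖φ p 0 - ψ 0‖ ≤ (0:ℝ) := by simp [hφ0, hψ0]
    have hgb := gronwall_finite_exceptions (δ := 0) hL
      (Finset.finite_toSet (S p)) hcont hder h0 t ht
    rw [gronwallBound_of_K_ne_0 hL.ne'] at hgb
    simp only [zero_mul, zero_add, sub_zero] at hgb
    refine hgb.trans ?_
    have h1 : Real.exp (L * t) ≤ Real.exp (L * T) :=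
      Real.exp_le_exp.2 (mul_le_mul_of_nonneg_left ht.2 hL.le)
    have h2 : (0:ℝ) ≤ (1/2 : ℝ) ^ p / L := by positivity
    exact mul_le_mul_of_nonneg_left (by linarith) h2
  refine ⟨key, ?_⟩
  rw [Metric.tendstoUniformlyOn_iff]
  intro ε hε
  have htend : Filter.Tendsto (fun p : ℕ => ((1/2 : ℝ)) ^ p / L * (Real.exp (L * T) - 1))
      Filter.atTop (nhds 0) := by
    have h0 : Filter.Tendsto (fun p : ℕ => ((1/2 : ℝ)) ^ p) Filter.atTop (nhds 0) :=
      tendsto_pow_atTop_nhds_zero_of_lt_one (by norm_num) (by norm_num)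
    have := (h0.div_const L).mul_const (Real.exp (L * T) - 1)
    simpa using this
  filter_upwards [htend.eventually_lt_const hε] with p hp t ht
  have hb := key p t ht
  rw [dist_eq_norm, norm_sub_rev]
  exact lt_of_le_of_lt hb hp
end
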